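/- Fix β > 1 + 1/(α−d) and set λ_t = (log t)^{−β}. Almost surely there exists t₀ such that whenever t₀ ≤ t₁ ≤ t₂ satisfy Z^{(1)}_{t₁} = Z^{(1)}_{t₂} and the inequality Φ_t(Z^{(1)}_t) − Φ_t(Z^{(2)}_t) ≥ (1/2) a_t λ_t holds at t = t₁ and at t = t₂, then Φ_t(Z^{(1)}_t) − Φ_t(Z^{(2)}_t) ≥ (1/2) a_t λ_t holds for all t ∈ [t₁, t₂]. -/

import Mathlib

open MeasureTheory Filter Real Set ProbabilityTheory

noncomputable section

/-- The `ℓ¹`-norm of a lattice point, as a real number. -/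
def lnorm {d : ℕ} (z : Fin d → ℤ) : ℝ := ∑ i, |(z i : ℝ)|

/-- The number of nearest-neighbour lattice paths of length `‖z‖₁` from the origin to `z`. -/
def numPaths (d : ℕ) (z : Fin d → ℤ) : ℕ :=
  Set.ncard {p : Fin (∑ i, (z i).natAbs + 1) → (Fin d → ℤ) |
    p 0 = 0 ∧ p (Fin.last _) = z ∧
    ∀ i : Fin (∑ i, (z i).natAbs), (∑ j, ((p i.succ j) - (p i.castSucc j)).natAbs) = 1}

/-- `η(z)`: the logarithm of the number of paths of length `‖z‖₁` from `0` to `z`. -/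
def pathEntropy {d : ℕ} (z : Fin d → ℤ) : ℝ := Real.log (numPaths d z)

/-- The functional `Φ_t` associated with a potential `ξ`:
`Φ_t(z) = ξ(z) - (|z|/t) log ξ(z) + η(z)/t` if `t ξ(z) ≥ |z|`, and `0` otherwise. -/
def Phi {d : ℕ} (ξ : (Fin d → ℤ) → ℝ) (t : ℝ) (z : Fin d → ℤ) : ℝ :=
  if lnorm z ≤ t * ξ z then ξ z - lnorm z / t * Real.log (ξ z) + pathEntropy z / t else 0

/-- The spatial scaling function `r_t = (t / log t) ^ (α/(α-d))`. -/
def rScale (α : ℝ) (d : ℕ) (t : ℝ) : ℝ := (t / Real.log t) ^ (α / (α - d))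

/-- The scaling function `a_t = (t / log t) ^ (d/(α-d))`. -/
def aScale (α : ℝ) (d : ℕ) (t : ℝ) : ℝ := (t / Real.log t) ^ ((d : ℝ) / (α - d))

/-- The potential `ξ` is a family of i.i.d. Pareto(α) random variables:
they are measurable, independent, and `P {ξ(z) ≤ x} = 1 - x^(-α)` for `x ≥ 1`. -/
def IsParetoPotential {d : ℕ} {Ω : Type*} [MeasurableSpace Ω] (P : Measure Ω)
    (α : ℝ) (ξ : (Fin d → ℤ) → Ω → ℝ) : Prop :=
  (∀ z, Measurable (ξ z)) ∧
  iIndepFun ξ P ∧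
  (∀ z x, 1 ≤ x → P {ω | ξ z ω ≤ x} = ENNReal.ofReal (1 - x ^ (-α)))

/-!
On its active region `t ξ(z) ≥ |z|`, the value `Φ_t(z)` is affine in `1/t`, and a site stays
active once activated. At its activation time `|z|/ξ(z)` the affine expression is at most `3^d`,
because `η(z) ≤ |z| log 3^d`. Almost surely two sites carry potential above `3^d + 1`, so for large
`t` the second largest value of `Φ_t` exceeds `3^d`.

Let `z = Z¹_{t₁} = Z¹_{t₂}` and let `w ≠ z` have `Φ_t(w) > 3^d` for some `t ∈ [t₁, t₂]`. Then the
affine extension of `Φ(z) - Φ(w)` dominates the gap `a_s λ_s / 2` at `s = t₁` and `s = t₂`: if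
`w` is inactive at `t₁`, its extension there is at most `3^d`, which is less than `Φ_{t₁}(Z²_{t₁})`.
In the variable `u = 1/s` the gap equals `exp(q v - (q + β) log v) / 2` with `v = -log u`. This is
convex for small `u`, so the domination holds on all of `[t₁, t₂]`. Taking `w = Z¹_t` shows
`Z¹_t = z`, and taking `w = Z²_t` gives the claim.
-/

lemma lnorm_eq_natCast_sum {d : ℕ} (z : Fin d → ℤ) : lnorm z = ((∑ i, (z i).natAbs : ℕ) : ℝ) := by
  simp only [lnorm, Nat.cast_sum, Nat.cast_natAbs, Int.cast_abs]

/-- A path is determined by its increments, each of which lies in `{-1, 0, 1}ᵈ`. -/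
lemma numPaths_le (d : ℕ) (z : Fin d → ℤ) : numPaths d z ≤ (3 ^ d) ^ ∑ i, (z i).natAbs := by
  set n := ∑ i, (z i).natAbs
  let steps : Finset (Fin n → Fin d → ℤ) :=
    Fintype.piFinset fun _ => Fintype.piFinset fun _ => Finset.Icc (-1) 1
  have hsteps : steps.card = (3 ^ d) ^ n := by simp [steps]
  rw [numPaths, ← hsteps, ← Set.ncard_coe_finset]
  refine Set.ncard_le_ncard_of_injOn (fun p i j => p i.succ j - p i.castSucc j) ?_ ?_
    steps.finite_toSet
  · rintro p ⟨-, -, hp⟩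
    simp only [steps, Finset.mem_coe, Fintype.mem_piFinset, Finset.mem_Icc]
    intro i j
    have := (Finset.single_le_sum (fun _ _ => Nat.zero_le _) (Finset.mem_univ j)).trans
      (hp i).le
    omega
  · rintro p ⟨hp0, -, -⟩ p' ⟨hp'0, -, -⟩ hpp'
    funext i
    induction i using Fin.induction with
    | zero => rw [hp0, hp'0]
    | succ i ih =>
      funext j
      have := congrFun (congrFun hpp' i) j
      have := congrFun ih j
      simp only at *
      omega

lemma pathEntropy_le {d : ℕ} (z : Fin d → ℤ) : pathEntropy z ≤ lnorm z * Real.log (3 ^ d) := by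
  rw [pathEntropy, lnorm_eq_natCast_sum]
  rcases (numPaths d z).eq_zero_or_pos with h | h
  · rw [h, Nat.cast_zero, Real.log_zero]
    exact mul_nonneg (Nat.cast_nonneg _) (Real.log_nonneg (one_le_pow₀ (by norm_num)))
  · calc Real.log (numPaths d z) ≤ Real.log (((3 : ℝ) ^ d) ^ ∑ i, (z i).natAbs) :=
          Real.log_le_log (by exact_mod_cast h) (by exact_mod_cast numPaths_le d z)
      _ = _ := by rw [Real.log_pow]

section Convexity

variable {q m : ℝ}

lemma monotoneOn_mul_sub_mul_log (hq : 0 < q) (hm : 0 < m) :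
    MonotoneOn (fun v => q * v - m * Real.log v) (Ici (m / q)) := by
  intro a ha b _ hab
  have ha0 : 0 < a := (div_pos hm hq).trans_le ha
  have hma : m ≤ q * a := by rwa [mem_Ici, div_le_iff₀ hq, mul_comm] at ha
  have hlog : Real.log b - Real.log a ≤ (b - a) / a := by
    rw [← Real.log_div (ha0.trans_le hab).ne' ha0.ne', sub_div, div_self ha0.ne']
    exact Real.log_le_sub_one_of_pos (div_pos (ha0.trans_le hab) ha0)
  have : m * ((b - a) / a) ≤ q * (b - a) := by
    rw [mul_div_assoc', div_le_iff₀ ha0]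
    nlinarith [sub_nonneg.2 hab]
  simp only
  nlinarith [mul_le_mul_of_nonneg_left hlog hm.le]

lemma convexOn_exp_mul_sub_mul_log (hm : 0 ≤ m) :
    ConvexOn ℝ (Ioi 0) (fun v => Real.exp (q * v - m * Real.log v)) := by
  have hlin : ConvexOn ℝ (Ioi 0) (fun v : ℝ => q * v - m * Real.log v) :=
    ((LinearMap.mulLeft ℝ q).convexOn (convex_Ioi 0)).sub
      (strictConcaveOn_log_Ioi.concaveOn.smul hm)
  refine ⟨convex_Ioi 0, fun x hx y hy a b ha hb hab => ?_⟩
  calc Real.exp (q * (a • x + b • y) - m * Real.log (a • x + b • y))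
      ≤ Real.exp (a • (q * x - m * Real.log x) + b • (q * y - m * Real.log y)) :=
        Real.exp_le_exp.2 (hlin.2 hx hy ha hb hab)
    _ ≤ _ := convexOn_exp.2 (mem_univ _) (mem_univ _) ha hb hab

lemma convexOn_exp_comp_neg_log (hq : 0 < q) (hm : 0 < m) :
    ConvexOn ℝ (Ioo 0 (Real.exp (-(m / q))))
      (fun u => Real.exp (q * -Real.log u - m * Real.log (-Real.log u))) := by
  have himage : (fun u => -Real.log u) '' Ioo 0 (Real.exp (-(m / q))) = Ioi (m / q) := by
    rw [show (fun u => -Real.log u) = Neg.neg ∘ Real.log from rfl, image_comp,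
      Real.image_log_Ioo_zero (Real.exp_pos _), Real.log_exp, image_neg_Iio, neg_neg]
  have hneglog : ConvexOn ℝ (Ioo 0 (Real.exp (-(m / q)))) (fun u => -Real.log u) :=
    strictConcaveOn_log_Ioi.concaveOn.neg.subset Ioo_subset_Ioi_self (convex_Ioo _ _)
  refine ConvexOn.comp (g := fun v => Real.exp (q * v - m * Real.log v)) ?_ hneglog ?_ <;>
    rw [himage]
  · exact (convexOn_exp_mul_sub_mul_log hm.le).subset (Ioi_subset_Ioi (div_pos hm hq).le)
      (convex_Ioi _)
  · exact (Real.exp_monotone.comp_monotoneOn (monotoneOn_mul_sub_mul_log hq hm)).mono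
      Ioi_subset_Ici_self

end Convexity

lemma aScale_mul_log_rpow_eq_exp {α β t : ℝ} {d : ℕ} (ht : 1 < t) :
    aScale α d t * Real.log t ^ (-β) =
      Real.exp (d / (α - d) * Real.log t - (d / (α - d) + β) * Real.log (Real.log t)) := by
  have hlog : 0 < Real.log t := Real.log_pos ht
  rw [aScale, Real.rpow_def_of_pos (div_pos (by linarith) hlog), Real.rpow_def_of_pos hlog,
    ← Real.exp_add, Real.log_div (by linarith) hlog.ne']
  ring_nf

lemma convexOn_half_aScale_mul_log_rpow_inv {α β : ℝ} {d : ℕ} (hd : 1 ≤ d) (hα : (d : ℝ) < α)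
    (hβ : 0 < β) :
    ConvexOn ℝ (Ioo 0 (Real.exp (-((d / (α - d) + β) / (d / (α - d))))))
      (fun u => 1 / 2 * aScale α d u⁻¹ * Real.log u⁻¹ ^ (-β)) := by
  have hq : (0 : ℝ) < d / (α - d) := div_pos (by exact_mod_cast hd) (by linarith)
  refine ((convexOn_exp_comp_neg_log hq (by linarith)).smul (by norm_num : (0 : ℝ) ≤ 1 / 2)).congr
    fun u ⟨hu0, hu⟩ => ?_
  have hu1 : u < 1 := hu.trans_le (Real.exp_le_one_iff.2 (neg_nonpos.2 (by positivity)))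
  simp only [smul_eq_mul]
  rw [mul_assoc, aScale_mul_log_rpow_eq_exp ((one_lt_inv₀ hu0).2 hu1), Real.log_inv]

lemma le_add_div_of_convexOn_inv {f : ℝ → ℝ} {u₀ A B t₁ t t₂ : ℝ}
    (hf : ConvexOn ℝ (Ioo 0 u₀) fun u => f u⁻¹) (h₀ : 0 < t₁) (hu₀ : t₁⁻¹ < u₀)
    (h₁ : t₁ ≤ t) (h₂ : t ≤ t₂) (hf₁ : f t₁ ≤ A + B / t₁) (hf₂ : f t₂ ≤ A + B / t₂) :
    f t ≤ A + B / t := by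
  have hmem : ∀ s, t₁ ≤ s → s⁻¹ ∈ Ioo 0 u₀ := fun s hs =>
    ⟨inv_pos.2 (h₀.trans_le hs), (inv_anti₀ h₀ hs).trans_lt hu₀⟩
  have hseg : t⁻¹ ∈ segment ℝ t₂⁻¹ t₁⁻¹ := by
    rw [segment_eq_Icc (inv_anti₀ h₀ (h₁.trans h₂))]
    exact ⟨inv_anti₀ (h₀.trans_le h₁) h₂, inv_anti₀ h₀ h₁⟩
  obtain ⟨a, b, ha, hb, hab, hcomb⟩ := hseg
  have hconv := hf.2 (hmem t₂ (h₁.trans h₂)) (hmem t₁ le_rfl) ha hb hab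
  simp only [smul_eq_mul, inv_inv] at hconv hcomb
  rw [hcomb, inv_inv] at hconv
  calc f t ≤ a * f t₂ + b * f t₁ := hconv
    _ ≤ a * (A + B / t₂) + b * (A + B / t₁) := by gcongr
    _ = (a + b) * A + B * (a * t₂⁻¹ + b * t₁⁻¹) := by ring
    _ = A + B / t := by rw [hab, hcomb, one_mul, div_eq_mul_inv]

def IsTopTwo {S β : Type*} [LE β] (F : S → β) (z₁ z₂ : S) : Prop :=
  (∀ z, F z ≤ F z₁) ∧ z₂ ≠ z₁ ∧ ∀ z, z ≠ z₁ → F z ≤ F z₂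

lemma IsTopTwo.lt_snd {S β : Type*} [Preorder β] {F : S → β} {z₁ z₂ v₁ v₂ : S} {c : β}
    (h : IsTopTwo F z₁ z₂) (hv : v₁ ≠ v₂) (h₁ : c < F v₁) (h₂ : c < F v₂) : c < F z₂ := by
  by_cases hv₁ : v₁ = z₁
  · exact h₂.trans_le (h.2.2 v₂ fun hv₂ => hv (hv₁.trans hv₂.symm))
  · exact h₁.trans_le (h.2.2 v₁ hv₁)

section Phi

variable {d : ℕ} {Ξ : (Fin d → ℤ) → ℝ} {κ s t : ℝ} {z w : Fin d → ℤ}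

def phiExt (Ξ : (Fin d → ℤ) → ℝ) (t : ℝ) (z : Fin d → ℤ) : ℝ :=
  Ξ z + (pathEntropy z - lnorm z * Real.log (Ξ z)) / t

lemma Phi_eq_phiExt (ht : 0 < t) (h : lnorm z ≤ t * Ξ z) : Phi Ξ t z = phiExt Ξ t z := by
  rw [Phi, if_pos h, phiExt]
  field_simp
  ring

lemma lnorm_le_mul_of_Phi_pos (h : 0 < Phi Ξ t z) : lnorm z ≤ t * Ξ z := by
  by_contra h'
  rw [Phi, if_neg h'] at h
  exact h.false

lemma eventually_sub_one_le_Phi (hz : 1 ≤ Ξ z) : ∀ᶠ t in atTop, Ξ z - 1 ≤ Phi Ξ t z := by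
  filter_upwards [eventually_gt_atTop 0, eventually_ge_atTop (lnorm z),
    eventually_ge_atTop (lnorm z * Real.log (Ξ z))] with t ht hlnorm hlog
  rw [Phi, if_pos (hlnorm.trans (le_mul_of_one_le_right ht.le hz))]
  have : lnorm z / t * Real.log (Ξ z) ≤ 1 := by rwa [div_mul_eq_mul_div, div_le_one ht]
  have : 0 ≤ pathEntropy z / t := div_nonneg (Real.log_natCast_nonneg _) ht.le
  linarith

/-- At the activation time, `phiExt Ξ s z ≤ x (1 + log (κ / x)) ≤ κ` with `x = Ξ z`. -/
lemma phiExt_le_of_lnorm_eq (hκ : 0 < κ) (hη : pathEntropy z ≤ lnorm z * Real.log κ)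
    (hz : 0 < Ξ z) (hs : 0 < s) (h : lnorm z = s * Ξ z) : phiExt Ξ s z ≤ κ := by
  have hentropy : pathEntropy z / s ≤ Ξ z * Real.log κ := by
    rw [div_le_iff₀ hs]
    calc pathEntropy z ≤ lnorm z * Real.log κ := hη
      _ = Ξ z * Real.log κ * s := by rw [h]; ring
  have hlog : Real.log κ - Real.log (Ξ z) ≤ κ / Ξ z - 1 := by
    rw [← Real.log_div hκ.ne' hz.ne']
    exact Real.log_le_sub_one_of_pos (div_pos hκ hz)
  have hphi : phiExt Ξ s z = Ξ z - Ξ z * Real.log (Ξ z) + pathEntropy z / s := by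
    rw [phiExt, h]
    field_simp
    ring
  have := mul_le_mul_of_nonneg_left hlog hz.le
  have hκ' : Ξ z * (κ / Ξ z - 1) = κ - Ξ z := by field_simp
  rw [hκ'] at this
  linarith

/-- If `w` is still inactive at `s`, its activation time `ts` lies in `(s, t]`. As
`phiExt Ξ ts w ≤ κ < phiExt Ξ t w`, the map `1 / x ↦ phiExt Ξ x w` is affine and decreasing,
so `phiExt Ξ s w ≤ κ`. -/
lemma phiExt_le_max_Phi (hκ : 0 < κ) (hη : pathEntropy w ≤ lnorm w * Real.log κ)
    (hw : 0 < Ξ w) (hs : 0 < s) (hact : lnorm w ≤ t * Ξ w) (hlarge : κ < phiExt Ξ t w) :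
    phiExt Ξ s w ≤ max (Phi Ξ s w) κ := by
  by_cases h : lnorm w ≤ s * Ξ w
  · exact (Phi_eq_phiExt hs h).ge.trans (le_max_left _ _)
  push Not at h
  set ts := lnorm w / Ξ w
  have hts : lnorm w = ts * Ξ w := (div_mul_cancel₀ _ hw.ne').symm
  have hsts : s < ts := by rwa [lt_div_iff₀ hw]
  have htst : ts ≤ t := by rwa [div_le_iff₀ hw]
  have hκts := phiExt_le_of_lnorm_eq hκ hη hw (hs.trans hsts) hts
  set B := pathEntropy w - lnorm w * Real.log (Ξ w)
  have hB : B ≤ 0 := by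
    by_contra! hB
    have : B / t ≤ B / ts := div_le_div_of_nonneg_left hB.le (hs.trans hsts) htst
    have : phiExt Ξ t w ≤ phiExt Ξ ts w := add_le_add_right this _
    linarith
  have : B / s ≤ B / ts := by
    rw [div_le_div_iff₀ hs (hs.trans hsts)]
    nlinarith
  have : phiExt Ξ s w ≤ phiExt Ξ ts w := add_le_add_right this _
  exact (this.trans hκts).trans (le_max_right _ _)

lemma Phi_sub_Phi_le_phiExt_sub_phiExt {z' : Fin d → ℤ} (hs : 0 < s)
    (htop : IsTopTwo (Phi Ξ s) z z') (hz : lnorm z ≤ s * Ξ z) (hκ : κ ≤ Phi Ξ s z')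
    (hw : w ≠ z) (hwκ : phiExt Ξ s w ≤ max (Phi Ξ s w) κ) :
    Phi Ξ s z - Phi Ξ s z' ≤ phiExt Ξ s z - phiExt Ξ s w := by
  have := max_le (htop.2.2 w hw) hκ
  rw [Phi_eq_phiExt hs hz]
  linarith

theorem le_Phi_sub_Phi_of_mem_Icc (hκ : 0 < κ)
    (hη : ∀ z : Fin d → ℤ, pathEntropy z ≤ lnorm z * Real.log κ) (hΞ : ∀ z, 0 < Ξ z) {f : ℝ → ℝ}
    {u₀ t₁ t₂ : ℝ} (hf : ConvexOn ℝ (Ioo 0 u₀) fun u => f u⁻¹) (h₀ : 0 < t₁) (hu₀ : t₁⁻¹ < u₀)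
    {Z1 Z2 : ℝ → (Fin d → ℤ)} (htop : ∀ s ∈ Icc t₁ t₂, IsTopTwo (Phi Ξ s) (Z1 s) (Z2 s))
    (hsecond : ∀ s ∈ Icc t₁ t₂, κ < Phi Ξ s (Z2 s)) (hfpos : ∀ s ∈ Icc t₁ t₂, 0 < f s)
    (hZ : Z1 t₁ = Z1 t₂) (hgap₁ : f t₁ ≤ Phi Ξ t₁ (Z1 t₁) - Phi Ξ t₁ (Z2 t₁))
    (hgap₂ : f t₂ ≤ Phi Ξ t₂ (Z1 t₂) - Phi Ξ t₂ (Z2 t₂)) :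
    ∀ t ∈ Icc t₁ t₂, f t ≤ Phi Ξ t (Z1 t) - Phi Ξ t (Z2 t) := by
  intro t ht
  have ht₁ : t₁ ∈ Icc t₁ t₂ := ⟨le_rfl, ht.1.trans ht.2⟩
  have ht₂ : t₂ ∈ Icc t₁ t₂ := ⟨ht.1.trans ht.2, le_rfl⟩
  have htpos : 0 < t := h₀.trans_le ht.1
  set z := Z1 t₁
  rw [← hZ] at hgap₂
  have hz₁ : lnorm z ≤ t₁ * Ξ z := lnorm_le_mul_of_Phi_pos (by
    linarith [hsecond t₁ ht₁, hfpos t₁ ht₁])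
  have hz : ∀ s, t₁ ≤ s → lnorm z ≤ s * Ξ z := fun s hs =>
    hz₁.trans (mul_le_mul_of_nonneg_right hs (hΞ z).le)
  have htrail : ∀ w, w ≠ z → κ < Phi Ξ t w → f t ≤ Phi Ξ t z - Phi Ξ t w := by
    intro w hw hκw
    have hwact := lnorm_le_mul_of_Phi_pos (hκ.trans hκw)
    rw [Phi_eq_phiExt htpos hwact] at hκw
    have hwκ : ∀ s, 0 < s → phiExt Ξ s w ≤ max (Phi Ξ s w) κ := fun s hs =>
      phiExt_le_max_Phi hκ (hη w) (hΞ w) hs hwact hκw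
    have e₁ := Phi_sub_Phi_le_phiExt_sub_phiExt h₀ (htop t₁ ht₁) hz₁ (hsecond t₁ ht₁).le hw
      (hwκ t₁ h₀)
    have e₂ := Phi_sub_Phi_le_phiExt_sub_phiExt (h₀.trans_le ht₂.1) (hZ ▸ htop t₂ ht₂ :)
      (hz t₂ ht₂.1) (hsecond t₂ ht₂).le hw (hwκ t₂ (h₀.trans_le ht₂.1))
    have hsub : ∀ s, phiExt Ξ s z - phiExt Ξ s w = (Ξ z - Ξ w) +
        ((pathEntropy z - lnorm z * Real.log (Ξ z)) -
          (pathEntropy w - lnorm w * Real.log (Ξ w))) / s := fun s => by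
      simp only [phiExt]; ring
    rw [Phi_eq_phiExt htpos (hz t ht.1), Phi_eq_phiExt htpos hwact, hsub]
    rw [hsub] at e₁ e₂
    exact le_add_div_of_convexOn_inv hf h₀ hu₀ ht.1 ht.2 (hgap₁.trans e₁) (hgap₂.trans e₂)
  have hZ1 : Z1 t = z := by
    by_contra hne
    have := htrail (Z1 t) hne ((hsecond t ht).trans_le ((htop t ht).1 _))
    linarith [(htop t ht).1 z, hfpos t ht]
  rw [hZ1]
  exact htrail (Z2 t) (hZ1 ▸ (htop t ht).2.1) (hsecond t ht)

end Phi

section Probability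

variable {Ω : Type*} [MeasurableSpace Ω] {P : Measure Ω}

lemma ae_exists_ne_lt_of_iIndepFun {ι : Type*} [Infinite ι] {X : ι → Ω → ℝ}
    (hX : ∀ i, Measurable (X i)) (hind : iIndepFun X P) {C : ℝ} {ε : ENNReal} (hε : ε ≠ 0)
    (hC : ∀ i, ε ≤ P {ω | C < X i ω}) :
    ∀ᵐ ω ∂P, ∃ i j, i ≠ j ∧ C < X i ω ∧ C < X j ω := by
  have := hind.isProbabilityMeasure
  let v := Infinite.natEmbedding ι
  let s : ℕ → Set Ω := fun n => {ω | C < X (v n) ω}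
  have hs : ∀ n, MeasurableSet (s n) := fun n => measurableSet_lt measurable_const (hX _)
  have hsind : iIndepSet s P := (iIndepSet_iff_meas_biInter hs).2 fun S =>
    (hind.precomp v.injective).measure_inter_preimage_eq_mul S (sets := fun _ => Ioi C)
      fun _ _ => measurableSet_Ioi
  have hsum : ∑' n, P (s n) = ⊤ := top_unique <|
    (ENNReal.tsum_const_eq_top_of_ne_zero hε).ge.trans (ENNReal.tsum_le_tsum fun n => hC _)
  filter_upwards [(mem_ae_iff_prob_eq_one (MeasurableSet.measurableSet_limsup hs)).2
    (measure_limsup_eq_one hs hsind hsum)] with ω hω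
  obtain ⟨m, hm, n, hn, hmn⟩ :=
    (Nat.frequently_atTop_iff_infinite.1 (mem_limsup_iff_frequently_mem.1 hω)).nontrivial
  exact ⟨v m, v n, v.injective.ne hmn, hm, hn⟩

variable {d : ℕ} {α : ℝ} {ξ : (Fin d → ℤ) → Ω → ℝ}

lemma IsParetoPotential.ae_one_lt (hξ : IsParetoPotential P α ξ) : ∀ᵐ ω ∂P, ∀ z, 1 < ξ z ω :=
  ae_all_iff.2 fun z => ae_iff.2 <| by
    simpa only [not_lt, Real.one_rpow, sub_self, ENNReal.ofReal_zero] using hξ.2.2 z 1 le_rfl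

lemma IsParetoPotential.ae_exists_ne_lt [IsProbabilityMeasure P] (hd : 1 ≤ d)
    (hξ : IsParetoPotential P α ξ) {C : ℝ} (hC : 1 ≤ C) :
    ∀ᵐ ω ∂P, ∃ v₁ v₂, v₁ ≠ v₂ ∧ C < ξ v₁ ω ∧ C < ξ v₂ ω := by
  have : Nonempty (Fin d) := ⟨⟨0, hd⟩⟩
  have hlt : ENNReal.ofReal (1 - C ^ (-α)) < 1 := ENNReal.ofReal_lt_one.2 <| by
    linarith [Real.rpow_pos_of_pos (zero_lt_one.trans_le hC) (-α)]
  refine ae_exists_ne_lt_of_iIndepFun hξ.1 hξ.2.1 (tsub_pos_of_lt hlt).ne' fun z => ?_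
  have hcompl : {ω | C < ξ z ω} = {ω | ξ z ω ≤ C}ᶜ := by ext; simp
  rw [hcompl, prob_compl_eq_one_sub (measurableSet_le (hξ.1 z) measurable_const),
    hξ.2.2 z C hC]

end Probability

/-- **Separation of the two largest values of `Φ` persists between well-separated times.**
Fix `β > 1 + 1/(α-d)` and `λ_t = (log t)^(-β)`. Almost surely there is `t₀` such that whenever
`t₀ ≤ t₁ ≤ t₂`, `Z¹_{t₁} = Z¹_{t₂}` and `Φ_t(Z¹_t) - Φ_t(Z²_t) ≥ a_t λ_t / 2` holds at `t = t₁`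
and `t = t₂`, then it holds for all `t ∈ [t₁, t₂]`. -/
theorem separation_first_second (d : ℕ) (hd : 1 ≤ d) (α : ℝ) (hα : (d:ℝ) < α)
    {Ω : Type*} [MeasurableSpace Ω] (P : Measure Ω) [IsProbabilityMeasure P]
    (ξ : (Fin d → ℤ) → Ω → ℝ) (hξ : IsParetoPotential P α ξ)
    (β : ℝ) (hβ : 1 + 1 / (α - d) < β) :
    ∀ᵐ ω ∂P, ∀ Z1 Z2 : ℝ → (Fin d → ℤ),
      (∀ t : ℝ, 1 < t →
        (∀ z, Phi (fun w => ξ w ω) t z ≤ Phi (fun w => ξ w ω) t (Z1 t)) ∧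
        (∀ z, Phi (fun w => ξ w ω) t z = Phi (fun w => ξ w ω) t (Z1 t) →
          lnorm z ≤ lnorm (Z1 t)) ∧
        Z2 t ≠ Z1 t ∧
        (∀ z, z ≠ Z1 t → Phi (fun w => ξ w ω) t z ≤ Phi (fun w => ξ w ω) t (Z2 t)) ∧
        (∀ z, z ≠ Z1 t → Phi (fun w => ξ w ω) t z = Phi (fun w => ξ w ω) t (Z2 t) →
          lnorm z ≤ lnorm (Z2 t))) →
      ∃ t₀ : ℝ, 1 < t₀ ∧ ∀ t₁ t₂ : ℝ, t₀ ≤ t₁ → t₁ ≤ t₂ →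
        Z1 t₁ = Z1 t₂ →
        (1/2) * aScale α d t₁ * Real.log t₁ ^ (-β) ≤
          Phi (fun w => ξ w ω) t₁ (Z1 t₁) - Phi (fun w => ξ w ω) t₁ (Z2 t₁) →
        (1/2) * aScale α d t₂ * Real.log t₂ ^ (-β) ≤
          Phi (fun w => ξ w ω) t₂ (Z1 t₂) - Phi (fun w => ξ w ω) t₂ (Z2 t₂) →
        ∀ t ∈ Set.Icc t₁ t₂,
          (1/2) * aScale α d t * Real.log t ^ (-β) ≤
            Phi (fun w => ξ w ω) t (Z1 t) - Phi (fun w => ξ w ω) t (Z2 t) := by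
  have hκ : (0 : ℝ) < 3 ^ d := by positivity
  have hβ₀ : 0 < β := by linarith [one_div_pos.2 (sub_pos.2 hα)]
  filter_upwards [hξ.ae_one_lt, hξ.ae_exists_ne_lt hd (C := 3 ^ d + 1) (by linarith)]
    with ω hξ₁ ⟨v₁, v₂, hv, hv₁, hv₂⟩ Z1 Z2 H
  set Ξ := fun w => ξ w ω
  have htop : ∀ t, 1 < t → IsTopTwo (Phi Ξ t) (Z1 t) (Z2 t) := fun t ht =>
    ⟨(H t ht).1, (H t ht).2.2.1, (H t ht).2.2.2.1⟩
  have hlarge : ∀ v, 3 ^ d + 1 < Ξ v → ∀ᶠ t in atTop, 3 ^ d < Phi Ξ t v := fun v hv =>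
    (eventually_sub_one_le_Phi (Ξ := Ξ) (hξ₁ v).le).mono fun t ht => by linarith
  have hconv := convexOn_half_aScale_mul_log_rpow_inv hd hα hβ₀
  have hev : ∀ᶠ t in atTop, 1 < t ∧ t⁻¹ < Real.exp (-((d / (α - d) + β) / (d / (α - d)))) ∧
      3 ^ d < Phi Ξ t (Z2 t) := by
    filter_upwards [eventually_gt_atTop 1,
      tendsto_inv_atTop_zero.eventually (gt_mem_nhds (Real.exp_pos _)),
      hlarge v₁ hv₁, hlarge v₂ hv₂] with t ht hu h₁ h₂
    exact ⟨ht, hu, (htop t ht).lt_snd hv h₁ h₂⟩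
  obtain ⟨t₀, ht₀⟩ := eventually_atTop.1 hev
  refine ⟨max t₀ 2, by simp, fun t₁ t₂ h₀ h₁₂ hZ hgap₁ hgap₂ => ?_⟩
  have hmem : ∀ s ∈ Icc t₁ t₂, _ := fun s hs => ht₀ s ((le_max_left _ _).trans (h₀.trans hs.1))
  have ht₁ := hmem t₁ ⟨le_rfl, h₁₂⟩
  exact le_Phi_sub_Phi_of_mem_Icc (f := fun t => 1 / 2 * aScale α d t * Real.log t ^ (-β)) hκ
    pathEntropy_le (fun z => one_pos.trans (hξ₁ z)) hconv (one_pos.trans ht₁.1) ht₁.2.1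
    (fun s hs => htop s (hmem s hs).1) (fun s hs => (hmem s hs).2.2)
    (fun s hs => by rw [mul_assoc, aScale_mul_log_rpow_eq_exp (hmem s hs).1]; positivity)
    hZ hgap₁ hgap₂
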